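/- Let X be a metric space that admits a D-quasi-ruling. Then there exists a geodesic metric space X_g and a map ι: X → X_g that is a (1, 4D)-quasi-isometry. -/

import Mathlib

noncomputable section

open Filter Metric Set Topology

/-! ## Gromov products, hyperbolicity, and the visual boundary -/

/-- The Gromov product of `x` and `y` with respect to `o`. -/
def gromovProduct {X : Type*} [MetricSpace X] (o x y : X) : ℝ :=
  (dist o x + dist o y - dist x y) / 2

/-- A metric space is `δ`-hyperbolic if the Gromov product four-point condition holds. -/
def IsDeltaHyperbolic (X : Type*) [MetricSpace X] (δ : ℝ) : Prop :=
  ∀ o x y z : X, min (gromovProduct o x z) (gromovProduct o z y) - δ ≤ gromovProduct o x y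

/-- A metric space is Gromov hyperbolic if it is `δ`-hyperbolic for some `δ ≥ 0`. -/
def GromovHyperbolic (X : Type*) [MetricSpace X] : Prop :=
  ∃ δ : ℝ, 0 ≤ δ ∧ IsDeltaHyperbolic X δ

/-- A sequence converges to infinity if the Gromov products `(x_i | x_j)_o` tend to `∞`
(this is independent of the basepoint, so we quantify over all basepoints). -/
def ConvergesToInfinity {X : Type*} [MetricSpace X] (s : ℕ → X) : Prop :=
  ∀ o : X, Tendsto (fun p : ℕ × ℕ => gromovProduct o (s p.1) (s p.2)) atTop atTop

/-- Two sequences converging to infinity are equivalent if `(x_i | y_i)_o → ∞`. -/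
def AsympEquiv {X : Type*} [MetricSpace X] (s t : ℕ → X) : Prop :=
  ∀ o : X, Tendsto (fun i => gromovProduct o (s i) (t i)) atTop atTop

/-- Sequences converging to infinity. -/
abbrev BoundarySeq (X : Type*) [MetricSpace X] : Type _ :=
  { s : ℕ → X // ConvergesToInfinity s }

/-- The visual boundary (boundary at infinity) of a metric space:
equivalence classes of sequences converging to infinity. -/
def GromovBoundary (X : Type*) [MetricSpace X] : Type _ :=
  Quot (fun s t : BoundarySeq X => AsympEquiv s.1 t.1)

/-- The boundary point represented by a sequence converging to infinity. -/
def boundaryPt {X : Type*} [MetricSpace X] (s : BoundarySeq X) : GromovBoundary X :=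
  Quot.mk (fun s t : BoundarySeq X => AsympEquiv s.1 t.1) s

/-- The Gromov product of two boundary points with respect to `o`:
the infimum over representatives of the liminf of the Gromov products. -/
noncomputable def boundaryGromovProduct {X : Type*} [MetricSpace X] (o : X)
    (ξ η : GromovBoundary X) : ℝ :=
  sInf { r : ℝ | ∃ s t : BoundarySeq X, boundaryPt s = ξ ∧ boundaryPt t = η ∧
    r = liminf (fun i => gromovProduct o (s.1 i) (t.1 i)) atTop }

/-- The visual topology on the boundary at infinity, generated by the neighbourhood
bases `U_{o,R}(ξ) = {η | (ξ|η)_o > R}`. -/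
def visualTopology (X : Type*) [MetricSpace X] : TopologicalSpace (GromovBoundary X) :=
  TopologicalSpace.generateFrom
    { U : Set (GromovBoundary X) | ∃ (o : X) (ξ : GromovBoundary X) (R : ℝ),
        U = { η | R < boundaryGromovProduct o ξ η } }

/-- A path `γ : [a,∞) → X` defines the boundary point `ξ` if every monotone unbounded
sequence of parameters yields a sequence converging to infinity representing `ξ`. -/
def DefinesBoundaryPoint {X : Type*} [MetricSpace X] (γ : ℝ → X) (a : ℝ)
    (ξ : GromovBoundary X) : Prop :=
  ∀ t : ℕ → ℝ, (∀ i, a ≤ t i) → Monotone t → Tendsto t atTop atTop →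
    ∃ h : ConvergesToInfinity (fun i => γ (t i)), boundaryPt ⟨fun i => γ (t i), h⟩ = ξ

/-! ## Quasi-rulers, quasi-geodesics, coarse maps -/

/-- An unparametrised `D`-quasi-ruler on a (closed) interval `I ⊆ ℝ`. -/
structure IsQuasiRuler {X : Type*} [MetricSpace X] (D : ℝ) (I : Set ℝ) (γ : ℝ → X) : Prop where
  ruled : ∀ t ∈ I, ∀ s ∈ I, ∀ r ∈ I, t < s → s < r →
    dist (γ t) (γ s) + dist (γ s) (γ r) ≤ dist (γ t) (γ r) + D
  noJump : ∀ t₀ ∈ I, ∃ c : ℝ, c < D ∧ ∃ ε : ℝ, 0 < ε ∧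
    ∀ t ∈ I, |t - t₀| < ε → dist (γ t) (γ t₀) ≤ c

/-- A metric space admits a `D`-quasi-ruling if any two points are connected by an
unparametrised `D`-quasi-ruler. -/
def AdmitsQuasiRuling (X : Type*) [MetricSpace X] (D : ℝ) : Prop :=
  ∀ x y : X, ∃ (a b : ℝ) (γ : ℝ → X), a ≤ b ∧ γ a = x ∧ γ b = y ∧
    IsQuasiRuler D (Icc a b) γ

/-- `(K,C)`-coarsely Lipschitz maps. -/
def CoarselyLipschitzWith {Y X : Type*} [MetricSpace Y] [MetricSpace X]
    (K C : ℝ) (f : Y → X) : Prop :=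
  ∀ x y : Y, dist (f x) (f y) ≤ K * dist x y + C

def CoarselyLipschitz {Y X : Type*} [MetricSpace Y] [MetricSpace X] (f : Y → X) : Prop :=
  ∃ K C : ℝ, 1 ≤ K ∧ 0 ≤ C ∧ CoarselyLipschitzWith K C f

/-- `(K,C)`-quasi-isometric embeddings. -/
def IsQuasiIsometricEmbeddingWith {Y X : Type*} [MetricSpace Y] [MetricSpace X]
    (K C : ℝ) (f : Y → X) : Prop :=
  ∀ x y : Y, dist x y / K - C ≤ dist (f x) (f y) ∧ dist (f x) (f y) ≤ K * dist x y + C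

/-- `(K,C)`-quasi-isometries. -/
def IsQuasiIsometryWith {Y X : Type*} [MetricSpace Y] [MetricSpace X]
    (K C : ℝ) (f : Y → X) : Prop :=
  IsQuasiIsometricEmbeddingWith K C f ∧ ∀ x : X, ∃ y : Y, dist (f y) x ≤ C

def IsQuasiIsometry {Y X : Type*} [MetricSpace Y] [MetricSpace X] (f : Y → X) : Prop :=
  ∃ K C : ℝ, 1 ≤ K ∧ 0 ≤ C ∧ IsQuasiIsometryWith K C f

/-- `(K,C)`-quasi-geodesics parametrised over a subinterval `I ⊆ ℝ`. -/
def IsQuasiGeodesicOn {X : Type*} [MetricSpace X] (K C : ℝ) (I : Set ℝ) (γ : ℝ → X) : Prop :=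
  ∀ s ∈ I, ∀ t ∈ I, |s - t| / K - C ≤ dist (γ s) (γ t) ∧ dist (γ s) (γ t) ≤ K * |s - t| + C

/-- An unparametrised quasi-geodesic: a path admitting an orientation-preserving
reparametrisation which is a quasi-geodesic. -/
def IsUnparamQuasiGeodesicOn {X : Type*} [MetricSpace X] (I : Set ℝ) (γ : ℝ → X) : Prop :=
  ∃ (φ : ℝ → ℝ) (K C : ℝ), 1 ≤ K ∧ 0 ≤ C ∧ StrictMonoOn φ I ∧ BijOn φ I I ∧
    IsQuasiGeodesicOn K C I (fun t => γ (φ t))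

/-- A geodesic metric space: any two points are joined by an isometrically embedded segment. -/
def GeodesicSpace (Y : Type*) [MetricSpace Y] : Prop :=
  ∀ x y : Y, ∃ γ : ℝ → Y, γ 0 = x ∧ γ (dist x y) = y ∧
    ∀ s ∈ Icc (0 : ℝ) (dist x y), ∀ t ∈ Icc (0 : ℝ) (dist x y), dist (γ s) (γ t) = |s - t|

/-! ## Group actions -/

/-- The action of `G` is by isometries. -/
def IsometricAction (G X : Type*) [Group G] [MetricSpace X] [MulAction G X] : Prop :=
  ∀ g : G, Isometry (fun x : X => g • x)

/-- A cobounded action: translates of some bounded set cover the space. -/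
def CoboundedAction (G X : Type*) [Group G] [MetricSpace X] [MulAction G X] : Prop :=
  ∃ B : Set X, Bornology.IsBounded B ∧ ∀ x : X, ∃ g : G, g • x ∈ B

/-- A cocompact action: translates of some compact set cover the space. -/
def CocompactAction (G Y : Type*) [Group G] [MetricSpace Y] [MulAction G Y] : Prop :=
  ∃ K : Set Y, IsCompact K ∧ ∀ y : Y, ∃ g : G, g • y ∈ K

/-- A geometric action: isometric, properly discontinuous and cocompact. -/
def GeometricAction (G Y : Type*) [Group G] [MetricSpace Y] [MulAction G Y] : Prop :=
  IsometricAction G Y ∧ ProperlyDiscontinuousSMul G Y ∧ CocompactAction G Y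

/-- Coarse `G`-equivariance of a map between two `G`-spaces. -/
def CoarselyEquivariant (G : Type*) {Y X : Type*} [Group G] [MetricSpace Y] [MetricSpace X]
    [MulAction G Y] [MulAction G X] (f : Y → X) : Prop :=
  ∃ C : ℝ, 0 ≤ C ∧ ∀ (g : G) (y : Y), dist (f (g • y)) (g • f y) ≤ C

/-- A hyperbolic projection `(G, Y, X)`: a finitely generated group `G` acting geometrically
on a geodesic metric space `Y` and coboundedly by isometries on a Gromov hyperbolic space `X`
admitting a `D`-quasi-ruling. -/
structure HyperbolicProjection (G Y X : Type*) [Group G] [MetricSpace Y] [MetricSpace X]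
    [MulAction G Y] [MulAction G X] : Prop where
  fg : Group.FG G
  geodesicY : GeodesicSpace Y
  geometricY : GeometricAction G Y
  isometricX : IsometricAction G X
  coboundedX : CoboundedAction G X
  hyperbolicX : GromovHyperbolic X
  ruledX : ∃ D : ℝ, 0 ≤ D ∧ AdmitsQuasiRuling X D

/-- An induced projection map of a hyperbolic projection: any coarsely `G`-equivariant,
coarsely Lipschitz map `Y → X`. -/
def InducedProjection (G : Type*) {Y X : Type*} [Group G] [MetricSpace Y] [MetricSpace X]
    [MulAction G Y] [MulAction G X] (p : Y → X) : Prop :=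
  CoarselyEquivariant G p ∧ CoarselyLipschitz p
/-! ## Morse and sublinearly Morse boundaries -/

/-- Finite Hausdorff distance between two subsets. -/
def FiniteHausdorffDist {Y : Type*} [MetricSpace Y] (A B : Set Y) : Prop :=
  EMetric.hausdorffEdist A B < ⊤

/-- A quasi-geodesic ray, parametrised over `[0, ∞)`. -/
def IsQuasiGeodesicRay {Y : Type*} [MetricSpace Y] (γ : ℝ → Y) : Prop :=
  ∃ K C : ℝ, 1 ≤ K ∧ 0 ≤ C ∧ IsQuasiGeodesicOn K C (Ici 0) γ

/-- A geodesic ray, parametrised over `[0, ∞)`. -/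
def IsGeodesicRay {Y : Type*} [MetricSpace Y] (γ : ℝ → Y) : Prop :=
  ∀ s ∈ Ici (0 : ℝ), ∀ t ∈ Ici (0 : ℝ), dist (γ s) (γ t) = |s - t|

/-- A Morse subset: there is a gauge `μ` such that every `(K,C)`-quasi-geodesic segment with
endpoints on `Z` stays in the `μ(K,C)`-neighbourhood of `Z`. -/
def IsMorseSet {Y : Type*} [MetricSpace Y] (Z : Set Y) : Prop :=
  ∃ μ : ℝ → ℝ → ℝ, ∀ K C : ℝ, 1 ≤ K → 0 ≤ C → ∀ (a b : ℝ) (β : ℝ → Y), a ≤ b →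
    IsQuasiGeodesicOn K C (Icc a b) β → β a ∈ Z → β b ∈ Z →
    ∀ t ∈ Icc a b, infDist (β t) Z ≤ μ K C

/-- Morse quasi-geodesic rays. -/
abbrev MorseRay (Y : Type*) [MetricSpace Y] : Type _ :=
  { γ : ℝ → Y // IsQuasiGeodesicRay γ ∧ IsMorseSet (γ '' Ici 0) }

/-- The Morse boundary `∂₁ Y`: Morse quasi-geodesic rays modulo finite Hausdorff distance. -/
def MorseBoundary (Y : Type*) [MetricSpace Y] : Type _ :=
  Quot (fun γ γ' : MorseRay Y => FiniteHausdorffDist (γ.1 '' Ici 0) (γ'.1 '' Ici 0))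

def morsePt {Y : Type*} [MetricSpace Y] (γ : MorseRay Y) : MorseBoundary Y :=
  Quot.mk (fun γ γ' : MorseRay Y => FiniteHausdorffDist (γ.1 '' Ici 0) (γ'.1 '' Ici 0)) γ

/-- Morse-injectivity of a projection map: every unbounded Morse geodesic (ray or bi-infinite)
in `Y` projects to an unbounded unparametrised quasi-geodesic in `X`. -/
def MorseInjective {Y X : Type*} [MetricSpace Y] [MetricSpace X] (p : Y → X) : Prop :=
  ∀ (I : Set ℝ) (γ : ℝ → Y), (I = Ici (0 : ℝ) ∨ I = univ) →
    (∀ s ∈ I, ∀ t ∈ I, dist (γ s) (γ t) = |s - t|) →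
    IsMorseSet (γ '' I) → ¬ Bornology.IsBounded (γ '' I) →
    IsUnparamQuasiGeodesicOn I (fun t => p (γ t)) ∧
      ¬ Bornology.IsBounded ((fun t => p (γ t)) '' I)

/-- `f` is the boundary map `∂p` induced by the projection `p`: the class of every Morse
quasi-geodesic ray `γ` is sent to the boundary point defined by `p ∘ γ`. -/
def IsInducedBoundaryMap {Y X : Type*} [MetricSpace Y] [MetricSpace X] (p : Y → X)
    (f : MorseBoundary Y → GromovBoundary X) : Prop :=
  ∀ γ : MorseRay Y, DefinesBoundaryPoint (fun t => p (γ.1 t)) 0 (f (morsePt γ))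

/-- `f` is the boundary map `∂Ψ` induced by a quasi-isometry `Ψ` on Morse boundaries:
the class of `γ` is sent to the class of `Ψ ∘ γ`. -/
def IsInducedMorseBoundaryMap {Y Y' : Type*} [MetricSpace Y] [MetricSpace Y'] (Ψ : Y → Y')
    (f : MorseBoundary Y → MorseBoundary Y') : Prop :=
  ∀ γ : MorseRay Y,
    ∃ h : IsQuasiGeodesicRay (fun t => Ψ (γ.1 t)) ∧
        IsMorseSet ((fun t => Ψ (γ.1 t)) '' Ici 0),
      f (morsePt γ) = morsePt (⟨fun t => Ψ (γ.1 t), h⟩ : MorseRay Y')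

/-- `f` is the boundary map `∂Φ` induced by a map `Φ` between hyperbolic spaces:
the class of a sequence `(x_i)` is sent to the class of `(Φ x_i)`. -/
def IsInducedGromovBoundaryMap {X X' : Type*} [MetricSpace X] [MetricSpace X'] (Φ : X → X')
    (f : GromovBoundary X → GromovBoundary X') : Prop :=
  ∀ s : BoundarySeq X, ∃ h : ConvergesToInfinity (fun i => Φ (s.1 i)),
    f (boundaryPt s) = boundaryPt (⟨fun i => Φ (s.1 i), h⟩ : BoundarySeq X')

/-! ## Sublinear functions and `κ`-Morse boundaries -/

/-- A sublinear function: monotone increasing, concave, non-negative, with `κ(t)/t → 0`. -/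
def IsSublinear (κ : ℝ → ℝ) : Prop :=
  (∀ t ∈ Ici (0 : ℝ), 0 ≤ κ t) ∧ MonotoneOn κ (Ici 0) ∧ ConcaveOn ℝ (Ici 0) κ ∧
    Tendsto (fun t => κ t / t) atTop (nhds 0)

/-- The `(κ, n)`-neighbourhood of `Z` with respect to the basepoint `o`. -/
def kappaNbhd {Y : Type*} [MetricSpace Y] (o : Y) (κ : ℝ → ℝ) (Z : Set Y) (n : ℝ) : Set Y :=
  { y | infDist y Z ≤ n * κ (dist o y) }

/-- `Z` is `κ`-Morse with a specified Morse gauge `N`. -/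
def IsKappaMorseWith {Y : Type*} [MetricSpace Y] (o : Y) (κ : ℝ → ℝ) (N : ℝ → ℝ → ℝ)
    (Z : Set Y) : Prop :=
  ∀ K C : ℝ, 1 ≤ K → 0 ≤ C → ∀ (a b : ℝ) (β : ℝ → Y), a ≤ b →
    IsQuasiGeodesicOn K C (Icc a b) β → β a ∈ Z → β b ∈ Z →
    ∀ t ∈ Icc a b, β t ∈ kappaNbhd o κ Z (N K C)

/-- `Z` is `κ`-Morse. -/
def IsKappaMorse {Y : Type*} [MetricSpace Y] (o : Y) (κ : ℝ → ℝ) (Z : Set Y) : Prop :=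
  ∃ N : ℝ → ℝ → ℝ, IsKappaMorseWith o κ N Z

/-- Two sets `κ`-fellow travel (are `κ`-close) if each lies in a `κ`-neighbourhood
of the other. -/
def KappaClose {Y : Type*} [MetricSpace Y] (o : Y) (κ : ℝ → ℝ) (A B : Set Y) : Prop :=
  (∃ n : ℝ, 0 < n ∧ A ⊆ kappaNbhd o κ B n) ∧ (∃ n : ℝ, 0 < n ∧ B ⊆ kappaNbhd o κ A n)

/-- `κ`-Morse quasi-geodesic rays. -/
abbrev KappaMorseRay (Y : Type*) [MetricSpace Y] (o : Y) (κ : ℝ → ℝ) : Type _ :=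
  { γ : ℝ → Y // IsQuasiGeodesicRay γ ∧ IsKappaMorse o κ (γ '' Ici 0) }

/-- The `κ`-Morse boundary `∂_κ Y`: `κ`-Morse quasi-geodesic rays modulo `κ`-fellow
travelling. -/
def KappaBoundary (Y : Type*) [MetricSpace Y] (o : Y) (κ : ℝ → ℝ) : Type _ :=
  Quot (fun γ γ' : KappaMorseRay Y o κ => KappaClose o κ (γ.1 '' Ici 0) (γ'.1 '' Ici 0))

def kappaPt {Y : Type*} [MetricSpace Y] {o : Y} {κ : ℝ → ℝ} (γ : KappaMorseRay Y o κ) :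
    KappaBoundary Y o κ :=
  Quot.mk (fun γ γ' : KappaMorseRay Y o κ => KappaClose o κ (γ.1 '' Ici 0) (γ'.1 '' Ici 0)) γ

/-- `κ`-injectivity of a hyperbolic projection with projection map `p`: the projection of every
`κ`-Morse quasi-geodesic ray defines a boundary point, and two `κ`-Morse quasi-geodesic rays
are `κ`-close iff their projections define the same boundary point. -/
def KappaInjective {Y X : Type*} [MetricSpace Y] [MetricSpace X] (o : Y) (κ : ℝ → ℝ)
    (p : Y → X) : Prop :=
  (∀ γ : ℝ → Y, IsQuasiGeodesicRay γ → IsKappaMorse o κ (γ '' Ici 0) →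
    ∃ ξ : GromovBoundary X, DefinesBoundaryPoint (fun t => p (γ t)) 0 ξ) ∧
  (∀ γ γ' : ℝ → Y, IsQuasiGeodesicRay γ → IsKappaMorse o κ (γ '' Ici 0) →
    IsQuasiGeodesicRay γ' → IsKappaMorse o κ (γ' '' Ici 0) →
    (KappaClose o κ (γ '' Ici 0) (γ' '' Ici 0) ↔
      ∃ ξ : GromovBoundary X, DefinesBoundaryPoint (fun t => p (γ t)) 0 ξ ∧
        DefinesBoundaryPoint (fun t => p (γ' t)) 0 ξ))

/-- `f` is the boundary map `∂p` induced by `p` on the `κ`-Morse boundary. -/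
def IsInducedKappaBoundaryMap {Y X : Type*} [MetricSpace Y] [MetricSpace X] (o : Y)
    (κ : ℝ → ℝ) (p : Y → X) (f : KappaBoundary Y o κ → GromovBoundary X) : Prop :=
  ∀ γ : KappaMorseRay Y o κ, DefinesBoundaryPoint (fun t => p (γ.1 t)) 0 (f (kappaPt γ))

/-- `f` is the boundary map `∂Ψ` induced by a quasi-isometry `Ψ` on `κ`-Morse boundaries. -/
def IsInducedKappaQIMap {Y Y' : Type*} [MetricSpace Y] [MetricSpace Y'] (o : Y) (o' : Y')
    (κ : ℝ → ℝ) (Ψ : Y → Y')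
    (f : KappaBoundary Y o κ → KappaBoundary Y' o' κ) : Prop :=
  ∀ γ : KappaMorseRay Y o κ,
    ∃ h : IsQuasiGeodesicRay (fun t => Ψ (γ.1 t)) ∧
        IsKappaMorse o' κ ((fun t => Ψ (γ.1 t)) '' Ici 0),
      f (kappaPt γ) = kappaPt (⟨fun t => Ψ (γ.1 t), h⟩ : KappaMorseRay Y' o' κ)
/-! ## Coarse medians -/

/-- The median of three real numbers. -/
def realMedian (a b c : ℝ) : ℝ := max (min a b) (min (max a b) c)

/-- A coarse median with constant `C`. -/
def IsCoarseMedianWith {Y : Type*} [MetricSpace Y] (C : ℝ) (μ : Y → Y → Y → Y) : Prop :=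
  (∀ a b c : Y, μ a a b = a ∧ μ a b c = μ b a c ∧ μ a b c = μ b c a) ∧
  (∀ a b c x : Y, dist (μ (μ a x b) x c) (μ a x (μ b x c)) ≤ C) ∧
  (∀ a b c x : Y, dist (μ a b c) (μ x b c) ≤ C * dist a x + C)

/-- A coarse median. -/
def IsCoarseMedian {Y : Type*} [MetricSpace Y] (μ : Y → Y → Y → Y) : Prop :=
  ∃ C : ℝ, 0 ≤ C ∧ IsCoarseMedianWith C μ

/-- A coarse median map between coarse median spaces. -/
def IsCoarseMedianMap {Y Y' : Type*} [MetricSpace Y] [MetricSpace Y']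
    (μ : Y → Y → Y → Y) (μ' : Y' → Y' → Y' → Y') (f : Y → Y') : Prop :=
  ∃ D : ℝ, 0 ≤ D ∧ ∀ a b c : Y, dist (f (μ a b c)) (μ' (f a) (f b) (f c)) ≤ D

/-- A `G`-invariant coarse median (invariance up to uniformly bounded distance). -/
def EquivariantMedian (G : Type*) {Y : Type*} [Group G] [MetricSpace Y] [MulAction G Y]
    (μ : Y → Y → Y → Y) : Prop :=
  ∃ C : ℝ, 0 ≤ C ∧ ∀ (g : G) (a b c : Y), dist (g • μ a b c) (μ (g • a) (g • b) (g • c)) ≤ C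

/-- A `D`-median ray: a coarse median map (with constant `D`) from `[0,∞)`
with the standard median of `ℝ`. -/
def IsMedianRayWith {Y : Type*} [MetricSpace Y] (D : ℝ) (μ : Y → Y → Y → Y)
    (γ : ℝ → Y) : Prop :=
  ∀ a ∈ Ici (0 : ℝ), ∀ b ∈ Ici (0 : ℝ), ∀ c ∈ Ici (0 : ℝ),
    dist (γ (realMedian a b c)) (μ (γ a) (γ b) (γ c)) ≤ D

/-- A `μ`-median ray. -/
def IsMedianRay {Y : Type*} [MetricSpace Y] (μ : Y → Y → Y → Y) (γ : ℝ → Y) : Prop :=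
  ∃ D : ℝ, 0 ≤ D ∧ IsMedianRayWith D μ γ

/-- `∂_κ Y` has `μ`-median representatives: every point of the `κ`-Morse boundary is
represented by a `μ`-median quasi-geodesic ray. -/
def HasMedianRepresentatives {Y : Type*} [MetricSpace Y] (o : Y) (κ : ℝ → ℝ)
    (μ : Y → Y → Y → Y) : Prop :=
  ∀ γ : KappaMorseRay Y o κ, ∃ γ' : KappaMorseRay Y o κ, IsMedianRay μ γ'.1 ∧
    KappaClose o κ (γ.1 '' Ici 0) (γ'.1 '' Ici 0)

/-- `(κ, μ)`-injectivity of a hyperbolic projection with projection map `p`. -/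
def KappaMuInjective {Y X : Type*} [MetricSpace Y] [MetricSpace X] (o : Y) (κ : ℝ → ℝ)
    (μ : Y → Y → Y → Y) (p : Y → X) : Prop :=
  (∀ γ : ℝ → Y, IsQuasiGeodesicRay γ → IsKappaMorse o κ (γ '' Ici 0) → IsMedianRay μ γ →
    ∃ ξ : GromovBoundary X, DefinesBoundaryPoint (fun t => p (γ t)) 0 ξ) ∧
  (∀ γ γ' : ℝ → Y, IsQuasiGeodesicRay γ → IsKappaMorse o κ (γ '' Ici 0) → IsMedianRay μ γ →
    IsQuasiGeodesicRay γ' → IsKappaMorse o κ (γ' '' Ici 0) → IsMedianRay μ γ' →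
    (KappaClose o κ (γ '' Ici 0) (γ' '' Ici 0) ↔
      ∃ ξ : GromovBoundary X, DefinesBoundaryPoint (fun t => p (γ t)) 0 ξ ∧
        DefinesBoundaryPoint (fun t => p (γ' t)) 0 ξ))

/-- `f` is the boundary map `∂p` induced by `p` on the `κ`-Morse boundary, defined via
`μ`-median representatives. -/
def IsInducedKappaMuBoundaryMap {Y X : Type*} [MetricSpace Y] [MetricSpace X] (o : Y)
    (κ : ℝ → ℝ) (μ : Y → Y → Y → Y) (p : Y → X)
    (f : KappaBoundary Y o κ → GromovBoundary X) : Prop :=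
  ∀ γ : KappaMorseRay Y o κ, IsMedianRay μ γ.1 →
    DefinesBoundaryPoint (fun t => p (γ.1 t)) 0 (f (kappaPt γ))
/-! ## Trees and Cantor chains -/

/-- A geodesic ray from `root` in the graph `T`. -/
structure TreeRay {V : Type*} (T : SimpleGraph V) (root : V) where
  toFun : ℕ → V
  init : toFun 0 = root
  adj : ∀ n, T.Adj (toFun n) (toFun (n + 1))
  inj : Function.Injective toFun

/-- The visual topology on the space of rays from `root`, generated by the sets
`U_v` of rays passing through a vertex `v`. -/
def treeTopology {V : Type*} (T : SimpleGraph V) (root : V) :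
    TopologicalSpace (TreeRay T root) :=
  TopologicalSpace.generateFrom
    { U : Set (TreeRay T root) | ∃ v : V, U = { r | ∃ n, r.toFun n = v } }

/-- The rays from `root` that lie in the subgraph `S`. -/
def raysIn {V : Type*} {T : SimpleGraph V} (root : V) (S : T.Subgraph) :
    Set (TreeRay T root) :=
  { r | ∀ n, S.Adj (r.toFun n) (r.toFun (n + 1)) }

/-- Every vertex has countably infinite degree. -/
def CountablyBranching {V : Type*} (T : SimpleGraph V) : Prop :=
  ∀ v : V, (T.neighborSet v).Countable ∧ (T.neighborSet v).Infinite

/-- A nested family of locally finite subtrees, all of whose vertices have degree at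
least three, containing the root. -/
def SubtreeFamily {V : Type*} (T : SimpleGraph V) (root : V) (S : ℕ → T.Subgraph) : Prop :=
  (∀ i, root ∈ (S i).verts) ∧
  (∀ i, (S i).Connected) ∧
  (∀ i, ∀ v ∈ (S i).verts, ((S i).neighborSet v).Finite) ∧
  (∀ i, ∀ v ∈ (S i).verts, 3 ≤ ((S i).neighborSet v).ncard) ∧
  (∀ i, S i ≤ S (i + 1))

/-- The family is strongly entwined: each vertex of `S i` has strictly larger degree
in `S (i+1)`. -/
def StronglyEntwined {V : Type*} (T : SimpleGraph V) (S : ℕ → T.Subgraph) : Prop :=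
  ∀ i, ∀ v ∈ (S i).verts, (S i).neighborSet v ⊂ (S (i + 1)).neighborSet v

/-- The family fills `T`: every edge of `T` lies in some `S i`. -/
def FillsTree {V : Type*} (T : SimpleGraph V) (S : ℕ → T.Subgraph) : Prop :=
  ∀ u v : V, T.Adj u v → ∃ i, (S i).Adj u v

/-- The subtree spanned (convex hull from the root) by a family of rays from the root. -/
def raysHull {V : Type*} {T : SimpleGraph V} (root : V) (R : Set (TreeRay T root)) :
    T.Subgraph where
  verts := { v | ∃ r ∈ R, ∃ n, r.toFun n = v }
  Adj u v := ∃ r ∈ R, ∃ n, (r.toFun n = u ∧ r.toFun (n + 1) = v) ∨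
    (r.toFun n = v ∧ r.toFun (n + 1) = u)
  adj_sub := by
    rintro u v ⟨r, -, n, h | h⟩
    · rw [← h.1, ← h.2]; exact r.adj n
    · rw [← h.1, ← h.2]; exact (r.adj n).symm
  edge_vert := by
    rintro u v ⟨r, hr, n, h | h⟩
    · exact ⟨r, hr, n, h.1⟩
    · exact ⟨r, hr, n + 1, h.2⟩
  symm := by
    constructor
    rintro u v ⟨r, hr, n, h⟩
    exact ⟨r, hr, n, h.symm⟩

/-- A Cantor chain: a topological space homeomorphic to the union `⋃ i ∂∞ T_i ⊆ ∂∞ T∞`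
for a filling family of strongly entwined subtrees of the tree `T∞` of countably
infinite valence. -/
def IsCantorChain (Z : Type*) (τ : TopologicalSpace Z) : Prop :=
  ∃ (V : Type) (T : SimpleGraph V) (root : V) (S : ℕ → T.Subgraph),
    T.IsTree ∧ CountablyBranching T ∧ SubtreeFamily T root S ∧
    StronglyEntwined T S ∧ FillsTree T S ∧
    ∃ e : Z → TreeRay T root, Function.Injective e ∧
      range e = ⋃ i, raysIn root (S i) ∧
      τ = TopologicalSpace.induced e (treeTopology T root)

/-! The geodesic space is obtained from `X` by gluing segments in two rounds. First, for every
pair `x, y` a segment of length `d(x, y)` is attached at its ends to `x` and `y`, and by links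
of length `D` to finitely many points `z` of a `D`-quasi-ruler from `x` to `y`, the link to `z`
starting at position `(y|z)_x` of the segment. Summing the quasi-ruler inequalities for the
triples `(x, z, w)` and `(z, w, y)` gives `d(z, w) ≤ |(y|z)_x - (y|w)_x| + D`, so the links
create no shortcuts and `X` stays isometrically embedded; since the quasi-ruler has no jumps of
size `D`, finitely many such points already have `D`-dense positions, so every point of the
segment lies within `2D` of `X`. Second, every two points at distance at most `D` are joined
by an actual segment of that length, which turns the links into paths. Every distance is then
the length of a chain of finitely many segments, hence realised by a geodesic, and every point
lies within `D + 2D` of `X`. -/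

/-- Unlike geodesics, such paths can be concatenated without any condition on the lengths;
`LipschitzJoined.exists_isometry` turns one of length `dist x y` into a geodesic. -/
def LipschitzJoined {W : Type*} [PseudoMetricSpace W] (x y : W) (ℓ : ℝ) : Prop :=
  ∃ γ : ℝ → W, LipschitzWith 1 γ ∧ γ 0 = x ∧ ∃ t ∈ Icc 0 ℓ, γ t = y

lemma LipschitzWith.dist_le_abs_sub {W : Type*} [PseudoMetricSpace W] {γ : ℝ → W}
    (hγ : LipschitzWith 1 γ) (r r' : ℝ) : dist (γ r) (γ r') ≤ |r - r'| := by
  simpa [Real.dist_eq] using hγ.dist_le_mul r r'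

namespace LipschitzJoined

variable {W : Type*} [PseudoMetricSpace W] {x y z : W} {ℓ ℓ' : ℝ}

lemma refl (x : W) (hℓ : 0 ≤ ℓ) : LipschitzJoined x x ℓ :=
  ⟨fun _ => x, LipschitzWith.const' x, rfl, 0, ⟨le_rfl, hℓ⟩, rfl⟩

lemma mono (h : LipschitzJoined x y ℓ) (hℓ : ℓ ≤ ℓ') : LipschitzJoined x y ℓ' := by
  obtain ⟨γ, hγ, h0, t, ht, rfl⟩ := h
  exact ⟨γ, hγ, h0, t, ⟨ht.1, ht.2.trans hℓ⟩, rfl⟩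

lemma symm (h : LipschitzJoined x y ℓ) : LipschitzJoined y x ℓ := by
  obtain ⟨γ, hγ, rfl, t, ht, rfl⟩ := h
  refine ⟨fun r => γ (t - r), LipschitzWith.mk_one fun r r' => ?_, by simp, t, ht, by simp⟩
  simpa [Real.dist_eq, abs_sub_comm r r'] using hγ.dist_le_abs_sub (t - r) (t - r')

lemma trans (h₁ : LipschitzJoined x y ℓ) (h₂ : LipschitzJoined y z ℓ') :
    LipschitzJoined x z (ℓ + ℓ') := by
  obtain ⟨γ₁, hγ₁, rfl, t₁, ht₁, rfl⟩ := h₁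
  obtain ⟨γ₂, hγ₂, h₂0, t₂, ht₂, rfl⟩ := h₂
  set γ : ℝ → W := fun r => if r ≤ t₁ then γ₁ r else γ₂ (r - t₁)
  have hle : ∀ r r', r ≤ r' → dist (γ r) (γ r') ≤ r' - r := by
    intro r r' hrr'
    simp only [γ]
    split_ifs with h h'
    · simpa [abs_of_nonpos (sub_nonpos.2 hrr')] using hγ₁.dist_le_abs_sub r r'
    · have d₁ := hγ₁.dist_le_abs_sub r t₁
      have d₂ := hγ₂.dist_le_abs_sub 0 (r' - t₁)
      rw [abs_of_nonpos (by linarith)] at d₁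
      rw [h₂0, abs_of_nonpos (by linarith)] at d₂
      linarith [dist_triangle (γ₁ r) (γ₁ t₁) (γ₂ (r' - t₁))]
    · linarith
    · simpa [abs_of_nonpos (sub_nonpos.2 hrr')] using hγ₂.dist_le_abs_sub (r - t₁) (r' - t₁)
  refine ⟨γ, LipschitzWith.mk_one fun r r' => ?_, by simp [γ, ht₁.1], t₁ + t₂,
    ⟨by linarith [ht₁.1, ht₂.1], by linarith [ht₁.2, ht₂.2]⟩, ?_⟩
  · rcases le_total r r' with h | h
    · simpa [Real.dist_eq, abs_of_nonpos (sub_nonpos.2 h)] using hle r r' h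
    · simpa [Real.dist_eq, abs_of_nonneg (sub_nonneg.2 h), dist_comm] using hle r' r h
  · simp only [γ]
    split_ifs with h
    · have : t₂ = 0 := by linarith [ht₂.1]
      simp [this, h₂0]
    · simp

lemma of_lipschitzWith {φ : ℝ → W} (hφ : LipschitzWith 1 φ) (s t : ℝ) :
    LipschitzJoined (φ s) (φ t) |s - t| := by
  wlog hst : s ≤ t generalizing s t
  · rw [abs_sub_comm]; exact (this t s (le_of_not_ge hst)).symm
  refine ⟨fun r => φ (s + r), LipschitzWith.mk_one fun r r' => ?_, by simp, t - s,
    ⟨by linarith, by rw [abs_sub_comm, abs_of_nonneg (by linarith)]⟩, by simp⟩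
  simpa [Real.dist_eq] using hφ.dist_le_abs_sub (s + r) (s + r')

lemma exists_isometry (h : LipschitzJoined x y (dist x y)) :
    ∃ γ : ℝ → W, γ 0 = x ∧ γ (dist x y) = y ∧ ∀ s ∈ Icc (0 : ℝ) (dist x y),
      ∀ t ∈ Icc (0 : ℝ) (dist x y), dist (γ s) (γ t) = |s - t| := by
  obtain ⟨γ, hγ, rfl, t, ht, rfl⟩ := h
  have htd : dist (γ 0) (γ t) = t :=
    le_antisymm (by simpa [abs_of_nonneg ht.1] using hγ.dist_le_abs_sub 0 t) ht.2
  rw [htd]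
  refine ⟨γ, rfl, rfl, fun r hr r' hr' => ?_⟩
  wlog hrr' : r ≤ r' generalizing r r'
  · rw [dist_comm, abs_sub_comm]; exact this r' hr' r hr (le_of_not_ge hrr')
  refine le_antisymm (hγ.dist_le_abs_sub r r') ?_
  have h₁ := hγ.dist_le_abs_sub 0 r
  have h₂ := hγ.dist_le_abs_sub r' t
  have := dist_triangle4 (γ 0) (γ r) (γ r') (γ t)
  rw [abs_of_nonpos (by linarith [hr.1])] at h₁
  rw [abs_of_nonpos (by linarith [hr'.2])] at h₂
  rw [abs_of_nonpos (by linarith)]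
  linarith

end LipschitzJoined

/-- A port `⟨v, u, c⟩` of a segment links the point at position `u` of the segment to the point
`v` of the base space by a virtual link of length `c`. -/
structure Port (V : Type*) where
  anchor : V
  pos : ℝ
  cost : ℝ

def Port.exitCost {V : Type*} (a : Port V) (s : ℝ) : ℝ := a.cost + |s - a.pos|

/-- The last two fields say that the ports do not shorten distances in `V` and that routes through
`V` do not shorten distances along a segment. -/
structure SegmentGluing (V : Type*) [PseudoMetricSpace V] (ι : Type*) where
  len : ι → ℝ
  ports : ι → Finset (Port V)
  ports_nonempty : ∀ i, (ports i).Nonempty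
  pos_mem : ∀ i, ∀ a ∈ ports i, a.pos ∈ Icc 0 (len i)
  dist_anchor_le : ∀ i, ∀ a ∈ ports i, ∀ b ∈ ports i,
    dist a.anchor b.anchor ≤ a.cost + |a.pos - b.pos| + b.cost
  abs_pos_sub_le : ∀ i, ∀ a ∈ ports i, ∀ b ∈ ports i,
    |a.pos - b.pos| ≤ a.cost + dist a.anchor b.anchor + b.cost

namespace SegmentGluing

variable {V ι : Type*} [PseudoMetricSpace V] (G : SegmentGluing V ι)

structure Point where
  seg : ι
  pos : ℝ
  pos_mem : pos ∈ Icc 0 (G.len seg)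

def crossDist (p q : G.Point) : ℝ :=
  (G.ports p.seg ×ˢ G.ports q.seg).inf' ((G.ports_nonempty _).product (G.ports_nonempty _))
    fun ab => ab.1.exitCost p.pos + dist ab.1.anchor ab.2.anchor + ab.2.exitCost q.pos

variable {G}

lemma dist_anchor_le_exitCost {i : ι} {a b : Port V} (ha : a ∈ G.ports i) (hb : b ∈ G.ports i)
    (s : ℝ) : dist a.anchor b.anchor ≤ a.exitCost s + b.exitCost s := by
  have := G.dist_anchor_le i a ha b hb
  have := abs_sub_le a.pos s b.pos
  rw [abs_sub_comm a.pos s] at this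
  unfold Port.exitCost
  linarith

lemma crossDist_le {p q : G.Point} {a b : Port V} (ha : a ∈ G.ports p.seg)
    (hb : b ∈ G.ports q.seg) :
    G.crossDist p q ≤ a.exitCost p.pos + dist a.anchor b.anchor + b.exitCost q.pos :=
  Finset.inf'_le _ (b := (a, b)) (Finset.mem_product.2 ⟨ha, hb⟩)

lemma exists_crossDist_eq (p q : G.Point) : ∃ a ∈ G.ports p.seg, ∃ b ∈ G.ports q.seg,
    G.crossDist p q = a.exitCost p.pos + dist a.anchor b.anchor + b.exitCost q.pos := by
  obtain ⟨⟨a, b⟩, hab, h⟩ := Finset.exists_mem_eq_inf' ((G.ports_nonempty p.seg).product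
    (G.ports_nonempty q.seg)) (fun ab : Port V × Port V =>
      ab.1.exitCost p.pos + dist ab.1.anchor ab.2.anchor + ab.2.exitCost q.pos)
  exact ⟨a, (Finset.mem_product.1 hab).1, b, (Finset.mem_product.1 hab).2, h⟩

lemma crossDist_comm (p q : G.Point) : G.crossDist p q = G.crossDist q p := by
  suffices ∀ p q : G.Point, G.crossDist p q ≤ G.crossDist q p from
    le_antisymm (this p q) (this q p)
  intro p q
  obtain ⟨b, hb, a, ha, h⟩ := exists_crossDist_eq q p
  rw [h, dist_comm]
  linarith [crossDist_le ha hb (p := p) (q := q)]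

lemma crossDist_triangle (p q r : G.Point) :
    G.crossDist p r ≤ G.crossDist p q + G.crossDist q r := by
  obtain ⟨a, ha, b, hb, hpq⟩ := exists_crossDist_eq p q
  obtain ⟨b', hb', c, hc, hqr⟩ := exists_crossDist_eq q r
  have := crossDist_le ha hc
  have := dist_anchor_le_exitCost hb hb' q.pos
  have := dist_triangle4 a.anchor b.anchor b'.anchor c.anchor
  linarith

lemma crossDist_le_of_seg_eq {p q : G.Point} (h : p.seg = q.seg) (r : G.Point) :
    G.crossDist p r ≤ |p.pos - q.pos| + G.crossDist q r := by
  obtain ⟨b, hb, c, hc, hqr⟩ := exists_crossDist_eq q r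
  have := crossDist_le (h ▸ hb) hc (p := p)
  have := abs_sub_le p.pos q.pos b.pos
  unfold Port.exitCost at *
  linarith

lemma abs_sub_le_crossDist {p q : G.Point} (h : p.seg = q.seg) :
    |p.pos - q.pos| ≤ G.crossDist p q := by
  obtain ⟨a, ha, b, hb, hab⟩ := exists_crossDist_eq p q
  have := G.abs_pos_sub_le _ a ha b (h ▸ hb)
  have := abs_sub_le p.pos a.pos q.pos
  have := abs_sub_le a.pos b.pos q.pos
  rw [abs_sub_comm b.pos] at this
  unfold Port.exitCost at hab
  linarith

variable (G) in
open Classical in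
def gluedDist (p q : G.Point) : ℝ :=
  if p.seg = q.seg then |p.pos - q.pos| else G.crossDist p q

lemma gluedDist_of_seg_eq {p q : G.Point} (h : p.seg = q.seg) :
    G.gluedDist p q = |p.pos - q.pos| :=
  if_pos h

lemma gluedDist_of_seg_ne {p q : G.Point} (h : p.seg ≠ q.seg) :
    G.gluedDist p q = G.crossDist p q :=
  if_neg h

lemma gluedDist_le_crossDist (p q : G.Point) : G.gluedDist p q ≤ G.crossDist p q := by
  by_cases h : p.seg = q.seg
  · exact (gluedDist_of_seg_eq h).trans_le (abs_sub_le_crossDist h)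
  · exact (gluedDist_of_seg_ne h).le

lemma gluedDist_triangle (p q r : G.Point) :
    G.gluedDist p r ≤ G.gluedDist p q + G.gluedDist q r := by
  have hpr := gluedDist_le_crossDist p r
  by_cases hpq : p.seg = q.seg <;> by_cases hqr : q.seg = r.seg
  · rw [gluedDist_of_seg_eq hpq, gluedDist_of_seg_eq hqr, gluedDist_of_seg_eq (hpq.trans hqr)]
    exact abs_sub_le _ _ _
  · rw [gluedDist_of_seg_eq hpq, gluedDist_of_seg_ne hqr]
    linarith [crossDist_le_of_seg_eq hpq r]
  · have := crossDist_le_of_seg_eq hqr.symm p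
    rw [crossDist_comm r p, crossDist_comm q p, abs_sub_comm] at this
    rw [gluedDist_of_seg_ne hpq, gluedDist_of_seg_eq hqr]
    linarith
  · rw [gluedDist_of_seg_ne hpq, gluedDist_of_seg_ne hqr]
    linarith [crossDist_triangle p q r]

instance : PseudoMetricSpace G.Point where
  dist := G.gluedDist
  dist_self p := by simp [gluedDist]
  dist_comm p q := by
    by_cases h : p.seg = q.seg
    · rw [gluedDist_of_seg_eq h, gluedDist_of_seg_eq h.symm, abs_sub_comm]
    · rw [gluedDist_of_seg_ne h, gluedDist_of_seg_ne (Ne.symm h), crossDist_comm]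
  dist_triangle := gluedDist_triangle

lemma dist_le_exitCost {p q : G.Point} {a b : Port V} (ha : a ∈ G.ports p.seg)
    (hb : b ∈ G.ports q.seg) :
    dist p q ≤ a.exitCost p.pos + dist a.anchor b.anchor + b.exitCost q.pos :=
  (gluedDist_le_crossDist p q).trans (crossDist_le ha hb)

lemma dist_eq_abs_of_seg_eq {p q : G.Point} (h : p.seg = q.seg) :
    dist p q = |p.pos - q.pos| :=
  gluedDist_of_seg_eq h

lemma dist_eq_crossDist_of_seg_ne {p q : G.Point} (h : p.seg ≠ q.seg) :
    dist p q = G.crossDist p q :=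
  gluedDist_of_seg_ne h

lemma dist_eq_of_exitCost_eq_zero {p q : G.Point} {a b : Port V} (ha : a ∈ G.ports p.seg)
    (ha₀ : a.exitCost p.pos = 0) (hb : b ∈ G.ports q.seg) (hb₀ : b.exitCost q.pos = 0) :
    dist p q = dist a.anchor b.anchor := by
  refine le_antisymm (by simpa [ha₀, hb₀] using dist_le_exitCost ha hb) ?_
  by_cases h : p.seg = q.seg
  · have := dist_anchor_le_exitCost ha (h ▸ hb) q.pos
    have : a.exitCost q.pos ≤ a.exitCost p.pos + |p.pos - q.pos| := by
      unfold Port.exitCost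
      linarith [abs_sub_le q.pos p.pos a.pos, abs_sub_comm q.pos p.pos]
    rw [dist_eq_abs_of_seg_eq h]
    linarith
  · obtain ⟨a', ha', b', hb', h'⟩ := exists_crossDist_eq p q
    have := dist_anchor_le_exitCost ha ha' p.pos
    have := dist_anchor_le_exitCost hb' hb q.pos
    have := dist_triangle4 a.anchor a'.anchor b'.anchor b.anchor
    rw [dist_eq_crossDist_of_seg_ne h, h']
    linarith

lemma len_nonneg (i : ι) : 0 ≤ G.len i := by
  obtain ⟨a, ha⟩ := G.ports_nonempty i
  exact (G.pos_mem i a ha).1.trans (G.pos_mem i a ha).2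

variable (G) in
def segPt (i : ι) (s : ℝ) : G.Point :=
  ⟨i, projIcc 0 (G.len i) (len_nonneg i) s, Subtype.mem _⟩

lemma segPt_pos (p : G.Point) : G.segPt p.seg p.pos = p := by
  simp [segPt, projIcc_of_mem _ p.pos_mem]

lemma lipschitzWith_segPt (i : ι) : LipschitzWith 1 (G.segPt i) :=
  LipschitzWith.mk_one fun s t => by
    rw [dist_eq_abs_of_seg_eq (p := G.segPt i s) (q := G.segPt i t) rfl, Real.dist_eq]
    exact abs_projIcc_sub_projIcc (len_nonneg i)

section Geodesics

variable {W : Type*} [PseudoMetricSpace W] {f : G.Point → W}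

lemma lipschitzJoined_of_seg_eq (hf : Isometry f) {p q : G.Point} (h : p.seg = q.seg) :
    LipschitzJoined (f p) (f q) (dist p q) := by
  have hφ : LipschitzWith 1 (f ∘ G.segPt p.seg) := by
    simpa using hf.lipschitz.comp (lipschitzWith_segPt p.seg)
  have hq : G.segPt p.seg q.pos = q := h ▸ segPt_pos q
  simpa [segPt_pos, hq, dist_eq_abs_of_seg_eq h] using
    LipschitzJoined.of_lipschitzWith hφ p.pos q.pos

theorem lipschitzJoined (hf : Isometry f) (g : V → W)
    (hV : ∀ v w, LipschitzJoined (g v) (g w) (dist v w))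
    (hports : ∀ p : G.Point, ∀ a ∈ G.ports p.seg, p.pos = a.pos →
      LipschitzJoined (f p) (g a.anchor) a.cost)
    (p q : G.Point) : LipschitzJoined (f p) (f q) (dist p q) := by
  have hexit : ∀ p : G.Point, ∀ a ∈ G.ports p.seg,
      LipschitzJoined (f p) (g a.anchor) (a.exitCost p.pos) := by
    intro p a ha
    let p' : G.Point := ⟨p.seg, a.pos, G.pos_mem _ a ha⟩
    have := (lipschitzJoined_of_seg_eq hf (p := p) (q := p') rfl).trans (hports p' a ha rfl)
    rwa [dist_eq_abs_of_seg_eq (p := p) (q := p') rfl, add_comm] at this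
  by_cases h : p.seg = q.seg
  · exact lipschitzJoined_of_seg_eq hf h
  obtain ⟨a, ha, b, hb, hab⟩ := exists_crossDist_eq p q
  rw [dist_eq_crossDist_of_seg_ne h, hab]
  exact ((hexit p a ha).trans (hV _ _)).trans (hexit q b hb).symm

end Geodesics

end SegmentGluing

lemma exists_abs_sub_lt_of_eventually_abs_sub_lt {φ : ℝ → ℝ} {a b s D : ℝ} (hab : a ≤ b)
    (has : φ a ≤ s) (hsb : s ≤ φ b)
    (hφ : ∀ t₀ ∈ Icc a b, ∀ᶠ t in 𝓝[Icc a b] t₀, |φ t - φ t₀| < D) :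
    ∃ t ∈ Icc a b, |φ t - s| < D := by
  by_contra! hfar
  have hside : ∀ t ∈ Icc a b, φ t ≤ s - D ∨ s + D ≤ φ t := fun t ht => by
    rcases le_abs'.1 (hfar t ht) with h | h
    · left; linarith
    · right; linarith
  have hsame := isPreconnected_Icc.induction₂' (fun t t' => φ t < s ↔ φ t' < s)
    (fun t₀ ht₀ => by
      filter_upwards [hφ t₀ ht₀, self_mem_nhdsWithin] with t ht htI
      rw [abs_lt] at ht
      have : φ t₀ < s ↔ φ t < s := by
        rcases hside t₀ ht₀ with h₀ | h₀ <;> rcases hside t htI with h | h <;>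
          constructor <;> intro <;> linarith
      exact ⟨this, this.symm⟩)
    (fun _ _ _ _ _ _ h h' => h.trans h') (left_mem_Icc.2 hab) (right_mem_Icc.2 hab)
  have hD : 0 < D := by
    simpa using (hφ a (left_mem_Icc.2 hab)).self_of_nhdsWithin (left_mem_Icc.2 hab)
  rcases hside a (left_mem_Icc.2 hab) with h | h
  · exact not_lt.2 hsb (hsame.1 (by linarith))
  · linarith

section QuasiRulers

variable {X : Type*} [MetricSpace X]

section GromovProduct

variable (o x : X)

@[simp] lemma gromovProduct_base_right : gromovProduct o x o = 0 := by
  simp [gromovProduct, dist_comm]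

@[simp] lemma gromovProduct_self : gromovProduct o x x = dist o x := by
  simp [gromovProduct]

lemma gromovProduct_mem_Icc (y : X) : gromovProduct o x y ∈ Icc 0 (dist o x) := by
  unfold gromovProduct
  constructor <;> linarith [dist_triangle o y x, dist_triangle x o y, dist_triangle o x y,
    dist_comm o x]

lemma abs_gromovProduct_sub_le (y z : X) :
    |gromovProduct o x y - gromovProduct o x z| ≤ dist y z := by
  unfold gromovProduct
  rw [abs_le]
  constructor <;> linarith [dist_triangle o y z, dist_triangle o z y, dist_triangle x y z,
    dist_triangle x z y, dist_comm y z]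

end GromovProduct

namespace IsQuasiRuler

variable {D : ℝ} {I : Set ℝ} {γ : ℝ → X}

lemma eventually_dist_lt (hγ : IsQuasiRuler D I γ) {t₀ : ℝ} (ht₀ : t₀ ∈ I) :
    ∀ᶠ t in 𝓝[I] t₀, dist (γ t) (γ t₀) < D := by
  obtain ⟨c, hcD, ε, hε, hc⟩ := hγ.noJump t₀ ht₀
  rw [eventually_nhdsWithin_iff, Metric.eventually_nhds_iff]
  exact ⟨ε, hε, fun t ht htI => (hc t htI (by rwa [← Real.dist_eq])).trans_lt hcD⟩

lemma pos (hγ : IsQuasiRuler D I γ) {t : ℝ} (ht : t ∈ I) : 0 < D := by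
  simpa using (hγ.eventually_dist_lt ht).self_of_nhdsWithin ht

lemma dist_add_dist_le (hγ : IsQuasiRuler D I γ) {t s r : ℝ} (ht : t ∈ I) (hs : s ∈ I)
    (hr : r ∈ I) (hts : t ≤ s) (hsr : s ≤ r) :
    dist (γ t) (γ s) + dist (γ s) (γ r) ≤ dist (γ t) (γ r) + D := by
  have hD := hγ.pos ht
  rcases hts.eq_or_lt with rfl | hts
  · simp only [dist_self, zero_add]; linarith
  rcases hsr.eq_or_lt with rfl | hsr
  · simp only [dist_self, add_zero]; linarith
  exact hγ.ruled t ht s hs r hr hts hsr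

lemma dist_le_gromovProduct_sub {a b : ℝ} (hγ : IsQuasiRuler D (Icc a b) γ) {t s : ℝ}
    (ht : t ∈ Icc a b) (hs : s ∈ Icc a b) (hts : t ≤ s) :
    dist (γ t) (γ s) ≤
      gromovProduct (γ a) (γ b) (γ s) - gromovProduct (γ a) (γ b) (γ t) + D := by
  have hab : a ≤ b := ht.1.trans ht.2
  have h₁ := hγ.dist_add_dist_le (left_mem_Icc.2 hab) ht hs ht.1 hts
  have h₂ := hγ.dist_add_dist_le ht hs (right_mem_Icc.2 hab) hts hs.2
  unfold gromovProduct
  linarith [dist_comm (γ b) (γ s), dist_comm (γ b) (γ t)]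

end IsQuasiRuler

structure IsRulerSample (D : ℝ) (x y : X) (S : Finset X) : Prop where
  left_mem : x ∈ S
  right_mem : y ∈ S
  dist_le : ∀ z ∈ S, ∀ w ∈ S, dist z w ≤ |gromovProduct x y z - gromovProduct x y w| + D
  exists_near : ∀ s ∈ Icc 0 (dist x y), ∃ z ∈ S, |s - gromovProduct x y z| ≤ D

lemma IsQuasiRuler.exists_isRulerSample {D a b : ℝ} {γ : ℝ → X}
    (hγ : IsQuasiRuler D (Icc a b) γ) (hab : a ≤ b) : ∃ S, IsRulerSample D (γ a) (γ b) S := by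
  set u : ℝ → ℝ := fun t => gromovProduct (γ a) (γ b) (γ t)
  have hdist : ∀ t ∈ Icc a b, ∀ s ∈ Icc a b, dist (γ t) (γ s) ≤ |u t - u s| + D := by
    intro t ht s hs
    rcases le_total t s with h | h
    · linarith [hγ.dist_le_gromovProduct_sub ht hs h, neg_abs_le (u t - u s)]
    · linarith [hγ.dist_le_gromovProduct_sub hs ht h, le_abs_self (u t - u s),
        dist_comm (γ t) (γ s)]
  have hcover : Icc 0 (dist (γ a) (γ b)) ⊆ ⋃ t ∈ Icc a b, ball (u t) D := by
    intro s hs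
    obtain ⟨t, ht, hts⟩ := exists_abs_sub_lt_of_eventually_abs_sub_lt (φ := u) hab
      (by simpa [u] using hs.1) (by simpa [u] using hs.2) fun t₀ ht₀ => by
        filter_upwards [hγ.eventually_dist_lt ht₀] with t ht
        exact (abs_gromovProduct_sub_le _ _ _ _).trans_lt ht
    exact mem_iUnion₂.2 ⟨t, ht, by rwa [mem_ball, Real.dist_eq, abs_sub_comm]⟩
  obtain ⟨T, hTI, hTfin, hT⟩ :=
    isCompact_Icc.elim_finite_subcover_image (fun _ _ => isOpen_ball) hcover
  classical
  have hmem : ∀ z ∈ insert (γ a) (insert (γ b) (hTfin.toFinset.image γ)),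
      ∃ t ∈ Icc a b, γ t = z := by
    intro z hz
    simp only [Finset.mem_insert, Finset.mem_image, Set.Finite.mem_toFinset] at hz
    rcases hz with rfl | rfl | ⟨t, ht, rfl⟩
    exacts [⟨a, left_mem_Icc.2 hab, rfl⟩, ⟨b, right_mem_Icc.2 hab, rfl⟩, ⟨t, hTI ht, rfl⟩]
  refine ⟨insert (γ a) (insert (γ b) (hTfin.toFinset.image γ)), Finset.mem_insert_self _ _,
    Finset.mem_insert_of_mem (Finset.mem_insert_self _ _), fun z hz w hw => ?_, fun s hs => ?_⟩
  · obtain ⟨t, ht, rfl⟩ := hmem z hz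
    obtain ⟨s, hs, rfl⟩ := hmem w hw
    exact hdist t ht s hs
  · obtain ⟨t, ht, hst⟩ := mem_iUnion₂.1 (hT hs)
    refine ⟨γ t, Finset.mem_insert_of_mem (Finset.mem_insert_of_mem
      (Finset.mem_image_of_mem _ (hTfin.mem_toFinset.2 ht))), ?_⟩
    rw [mem_ball, Real.dist_eq] at hst
    exact hst.le

lemma AdmitsQuasiRuling.exists_isRulerSample {D : ℝ} (hX : AdmitsQuasiRuling X D) (x y : X) :
    ∃ S, IsRulerSample D x y S := by
  obtain ⟨a, b, γ, hab, rfl, rfl, hγ⟩ := hX x y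
  exact hγ.exists_isRulerSample hab

end QuasiRulers
section EdgeGluing

open Classical

variable {X : Type*} [MetricSpace X] {D : ℝ} {x y : X} {S : Finset X}

def rulerSample (hX : AdmitsQuasiRuling X D) (x y : X) : Finset X :=
  (hX.exists_isRulerSample x y).choose

lemma isRulerSample_rulerSample (hX : AdmitsQuasiRuling X D) (x y : X) :
    IsRulerSample D x y (rulerSample hX x y) :=
  (hX.exists_isRulerSample x y).choose_spec

def edgePorts (D : ℝ) (x y : X) (S : Finset X) : Finset (Port X) :=
  (insert (x, 0) (insert (y, 0) (S ×ˢ {D}))).image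
    fun zc => ⟨zc.1, gromovProduct x y zc.1, zc.2⟩

lemma left_mem_edgePorts : (⟨x, 0, 0⟩ : Port X) ∈ edgePorts D x y S :=
  Finset.mem_image.2 ⟨(x, 0), Finset.mem_insert_self _ _, by simp⟩

lemma right_mem_edgePorts : (⟨y, dist x y, 0⟩ : Port X) ∈ edgePorts D x y S :=
  Finset.mem_image.2 ⟨(y, 0), Finset.mem_insert_of_mem (Finset.mem_insert_self _ _), by simp⟩

lemma mem_edgePorts_of_mem {z : X} (hz : z ∈ S) :
    (⟨z, gromovProduct x y z, D⟩ : Port X) ∈ edgePorts D x y S :=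
  Finset.mem_image.2 ⟨(z, D), by simp [hz], rfl⟩

lemma exists_of_mem_edgePorts {a : Port X} (ha : a ∈ edgePorts D x y S) :
    ∃ z c, a = ⟨z, gromovProduct x y z, c⟩ ∧ (c = 0 ∧ (z = x ∨ z = y) ∨ c = D ∧ z ∈ S) := by
  simp only [edgePorts, Finset.mem_image, Finset.mem_insert, Finset.mem_product,
    Finset.mem_singleton, Prod.exists] at ha
  obtain ⟨z, c, hzc, rfl⟩ := ha
  refine ⟨z, c, rfl, ?_⟩
  rcases hzc with h | h | ⟨hz, hc⟩ <;> simp_all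

lemma cost_mem_Icc_of_mem_edgePorts (hD : 0 ≤ D) {a : Port X} (ha : a ∈ edgePorts D x y S) :
    a.cost ∈ Icc 0 D := by
  obtain ⟨z, c, rfl, ⟨rfl, -⟩ | ⟨rfl, -⟩⟩ := exists_of_mem_edgePorts ha
  exacts [⟨le_rfl, hD⟩, ⟨hD, le_rfl⟩]

lemma abs_pos_sub_le_of_mem_edgePorts (hD : 0 ≤ D) {a b : Port X}
    (ha : a ∈ edgePorts D x y S) (hb : b ∈ edgePorts D x y S) :
    |a.pos - b.pos| ≤ a.cost + dist a.anchor b.anchor + b.cost := by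
  have hca := cost_mem_Icc_of_mem_edgePorts hD ha
  have hcb := cost_mem_Icc_of_mem_edgePorts hD hb
  obtain ⟨z, c, rfl, -⟩ := exists_of_mem_edgePorts ha
  obtain ⟨w, c', rfl, -⟩ := exists_of_mem_edgePorts hb
  linarith [abs_gromovProduct_sub_le x y z w, hca.1, hcb.1]

lemma IsRulerSample.dist_anchor_le_of_mem_edgePorts (hS : IsRulerSample D x y S) (hD : 0 ≤ D)
    {a b : Port X} (ha : a ∈ edgePorts D x y S) (hb : b ∈ edgePorts D x y S) :
    dist a.anchor b.anchor ≤ a.cost + |a.pos - b.pos| + b.cost := by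
  have hcb := cost_mem_Icc_of_mem_edgePorts hD hb
  obtain ⟨z, c, rfl, hz⟩ := exists_of_mem_edgePorts ha
  obtain ⟨w, c', rfl, hw⟩ := exists_of_mem_edgePorts hb
  dsimp only at hcb ⊢
  rcases hz with ⟨rfl, hz⟩ | ⟨rfl, hz⟩
  · rcases hw with ⟨rfl, hw⟩ | ⟨rfl, hw⟩
    · rcases hz with rfl | rfl <;> rcases hw with rfl | rfl <;> simp [dist_comm]
    · have hz : z ∈ S := by rcases hz with rfl | rfl; exacts [hS.left_mem, hS.right_mem]
      linarith [hS.dist_le z hz w hw]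
  · have hw : w ∈ S := by
      rcases hw with ⟨-, rfl | rfl⟩ | ⟨-, hw⟩; exacts [hS.left_mem, hS.right_mem, hw]
    linarith [hS.dist_le z hz w hw, hcb.1]

def edgeGluing (hD : 0 ≤ D) (hX : AdmitsQuasiRuling X D) : SegmentGluing X (X × X) where
  len e := dist e.1 e.2
  ports e := edgePorts D e.1 e.2 (rulerSample hX e.1 e.2)
  ports_nonempty _ := ⟨_, left_mem_edgePorts⟩
  pos_mem e a ha := by
    obtain ⟨z, c, rfl, -⟩ := exists_of_mem_edgePorts ha
    exact gromovProduct_mem_Icc _ _ _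
  dist_anchor_le e _ ha _ hb :=
    (isRulerSample_rulerSample hX e.1 e.2).dist_anchor_le_of_mem_edgePorts hD ha hb
  abs_pos_sub_le _ _ ha _ hb := abs_pos_sub_le_of_mem_edgePorts hD ha hb

namespace edgeGluing

variable (hD : 0 ≤ D) (hX : AdmitsQuasiRuling X D)

def vertex (x : X) : (edgeGluing hD hX).Point := ⟨(x, x), 0, by simp [edgeGluing]⟩

variable {hD hX}

@[simp] lemma vertex_seg (x : X) : (vertex hD hX x).seg = (x, x) := rfl

@[simp] lemma vertex_pos (x : X) : (vertex hD hX x).pos = 0 := rfl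

lemma dist_vertex_vertex (x y : X) : dist (vertex hD hX x) (vertex hD hX y) = dist x y :=
  SegmentGluing.dist_eq_of_exitCost_eq_zero (p := vertex hD hX x) (q := vertex hD hX y)
    left_mem_edgePorts (by simp [Port.exitCost]) left_mem_edgePorts (by simp [Port.exitCost])

lemma dist_vertex_le_exitCost {p : (edgeGluing hD hX).Point} {a : Port X}
    (ha : a ∈ (edgeGluing hD hX).ports p.seg) :
    dist p (vertex hD hX a.anchor) ≤ a.exitCost p.pos := by
  simpa [Port.exitCost] using
    SegmentGluing.dist_le_exitCost (q := vertex hD hX a.anchor) ha left_mem_edgePorts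

lemma exists_dist_vertex_le (p : (edgeGluing hD hX).Point) :
    ∃ x, dist p (vertex hD hX x) ≤ 2 * D := by
  have hS := isRulerSample_rulerSample hX p.seg.1 p.seg.2
  obtain ⟨z, hz, hpz⟩ := hS.exists_near p.pos p.pos_mem
  refine ⟨z, (dist_vertex_le_exitCost (mem_edgePorts_of_mem hz)).trans ?_⟩
  simp only [Port.exitCost]
  linarith

section Geodesics

variable {W : Type*} [PseudoMetricSpace W] {f : (edgeGluing hD hX).Point → W}

lemma lipschitzJoined_vertex (hf : Isometry f)
    (hshort : ∀ p q, dist p q ≤ D → LipschitzJoined (f p) (f q) (dist p q)) (x y : X) :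
    LipschitzJoined (f (vertex hD hX x)) (f (vertex hD hX y)) (dist x y) := by
  let p₀ : (edgeGluing hD hX).Point := ⟨(x, y), 0, left_mem_Icc.2 dist_nonneg⟩
  let p₁ : (edgeGluing hD hX).Point := ⟨(x, y), dist x y, right_mem_Icc.2 dist_nonneg⟩
  have h₀ : dist (vertex hD hX x) p₀ = 0 := by
    refine le_antisymm ?_ dist_nonneg
    simpa [dist_comm, Port.exitCost, p₀] using
      dist_vertex_le_exitCost (p := p₀) (a := ⟨x, 0, 0⟩) left_mem_edgePorts
  have h₁ : dist p₁ (vertex hD hX y) = 0 := by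
    refine le_antisymm ?_ dist_nonneg
    simpa [Port.exitCost, p₁] using
      dist_vertex_le_exitCost (p := p₁) (a := ⟨y, dist x y, 0⟩) right_mem_edgePorts
  have h₀₁ : dist p₀ p₁ = dist x y := by
    simp [SegmentGluing.dist_eq_abs_of_seg_eq (p := p₀) (q := p₁) rfl, p₀, p₁]
  have := ((hshort _ _ (h₀.trans_le hD)).trans
    (SegmentGluing.lipschitzJoined_of_seg_eq hf (p := p₀) (q := p₁) rfl)).trans
    (hshort _ _ (h₁.trans_le hD))
  simpa [h₀, h₁, h₀₁] using this

theorem lipschitzJoined (hf : Isometry f)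
    (hshort : ∀ p q, dist p q ≤ D → LipschitzJoined (f p) (f q) (dist p q))
    (p q : (edgeGluing hD hX).Point) : LipschitzJoined (f p) (f q) (dist p q) := by
  refine SegmentGluing.lipschitzJoined hf (f ∘ vertex hD hX) (lipschitzJoined_vertex hf hshort)
    (fun p a ha hpos => ?_) p q
  have hcost : dist p (vertex hD hX a.anchor) ≤ a.cost := by
    simpa [Port.exitCost, hpos] using dist_vertex_le_exitCost ha
  exact (hshort _ _ (hcost.trans (cost_mem_Icc_of_mem_edgePorts hD ha).2)).mono hcost

end Geodesics

end edgeGluing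

end EdgeGluing

section ShortSegments

variable (V : Type*) [PseudoMetricSpace V] (R : ℝ)

open Classical in
/-- `inl v` is a segment of length `0` standing for `v` itself, and `inr ⟨(v, w), _⟩` a segment
of length `d(v, w)` from `v` to `w`. -/
def shortSegments : SegmentGluing V (V ⊕ {e : V × V // dist e.1 e.2 ≤ R}) where
  len := Sum.elim (fun _ => 0) fun e => dist e.1.1 e.1.2
  ports := Sum.elim (fun v => {⟨v, 0, 0⟩}) fun e => {⟨e.1.1, 0, 0⟩, ⟨e.1.2, dist e.1.1 e.1.2, 0⟩}
  ports_nonempty := by rintro (v | e) <;> simp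
  pos_mem := by
    rintro (v | e) a ha <;> simp only [Sum.elim_inl, Sum.elim_inr, Finset.mem_insert,
      Finset.mem_singleton] at ha ⊢ <;> rcases ha with rfl | rfl <;> simp
  dist_anchor_le := by
    rintro (v | e) a ha b hb <;> simp only [Sum.elim_inl, Sum.elim_inr, Finset.mem_insert,
      Finset.mem_singleton] at ha hb <;> rcases ha with rfl | rfl <;> rcases hb with rfl | rfl <;>
      simp [dist_comm]
  abs_pos_sub_le := by
    rintro (v | e) a ha b hb <;> simp only [Sum.elim_inl, Sum.elim_inr, Finset.mem_insert,
      Finset.mem_singleton] at ha hb <;> rcases ha with rfl | rfl <;> rcases hb with rfl | rfl <;>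
      simp [dist_comm]

namespace shortSegments

variable {V R}

def vertex (v : V) : (shortSegments V R).Point := ⟨.inl v, 0, by simp [shortSegments]⟩

@[simp] lemma vertex_seg (v : V) : (vertex (R := R) v).seg = .inl v := rfl

@[simp] lemma vertex_pos (v : V) : (vertex (R := R) v).pos = 0 := rfl

lemma cost_eq_zero {i} {a : Port V} (ha : a ∈ (shortSegments V R).ports i) : a.cost = 0 := by
  rcases i with v | e <;> simp only [shortSegments, Sum.elim_inl, Sum.elim_inr,
    Finset.mem_insert, Finset.mem_singleton] at ha <;> rcases ha with rfl | rfl <;> rfl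

lemma vertex_mem_ports (v : V) :
    (⟨v, 0, 0⟩ : Port V) ∈ (shortSegments V R).ports (vertex (R := R) v).seg := by
  simp [shortSegments]

lemma isometry_vertex : Isometry (vertex : V → (shortSegments V R).Point) :=
  Isometry.of_dist_eq fun v w => SegmentGluing.dist_eq_of_exitCost_eq_zero (vertex_mem_ports v)
    (by simp [Port.exitCost]) (vertex_mem_ports w) (by simp [Port.exitCost])

lemma dist_vertex_le_exitCost {p : (shortSegments V R).Point} {a : Port V}
    (ha : a ∈ (shortSegments V R).ports p.seg) :
    dist p (vertex a.anchor) ≤ a.exitCost p.pos := by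
  simpa [Port.exitCost] using
    SegmentGluing.dist_le_exitCost (q := vertex a.anchor) ha (vertex_mem_ports a.anchor)

lemma mk_eq_mk_vertex {p : (shortSegments V R).Point} {a : Port V}
    (ha : a ∈ (shortSegments V R).ports p.seg) (hpos : p.pos = a.pos) :
    SeparationQuotient.mk p = SeparationQuotient.mk (vertex a.anchor) := by
  refine SeparationQuotient.mk_eq_mk.2 (Metric.inseparable_iff.2 (le_antisymm ?_ dist_nonneg))
  simpa [Port.exitCost, hpos, cost_eq_zero ha] using dist_vertex_le_exitCost ha

lemma isometry_mk : Isometry (SeparationQuotient.mk : (shortSegments V R).Point → _) :=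
  Isometry.of_dist_eq fun _ _ => SeparationQuotient.dist_mk _ _

lemma lipschitzJoined_vertex {v w : V} (h : dist v w ≤ R) :
    LipschitzJoined (SeparationQuotient.mk (vertex (R := R) v))
      (SeparationQuotient.mk (vertex w)) (dist v w) := by
  let p₀ : (shortSegments V R).Point := ⟨.inr ⟨(v, w), h⟩, 0, by simp [shortSegments]⟩
  let p₁ : (shortSegments V R).Point := ⟨.inr ⟨(v, w), h⟩, dist v w, by simp [shortSegments]⟩
  have h₀₁ : dist p₀ p₁ = dist v w := by
    simp [SegmentGluing.dist_eq_abs_of_seg_eq (p := p₀) (q := p₁) rfl, p₀, p₁]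
  have := SegmentGluing.lipschitzJoined_of_seg_eq isometry_mk (p := p₀) (q := p₁) rfl
  rwa [mk_eq_mk_vertex (p := p₀) (a := ⟨v, 0, 0⟩) (by simp [shortSegments, p₀]) rfl,
    mk_eq_mk_vertex (p := p₁) (a := ⟨w, dist v w, 0⟩) (by simp [shortSegments, p₁]) rfl,
    h₀₁] at this

lemma exists_dist_vertex_le (hR : 0 ≤ R) (p : (shortSegments V R).Point) :
    ∃ v, dist p (vertex v) ≤ R := by
  obtain ⟨v | ⟨⟨v, w⟩, h⟩, s, hs⟩ := p
  · have hs : s = 0 := by simpa [shortSegments] using hs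
    refine ⟨v, (dist_vertex_le_exitCost (a := ⟨v, 0, 0⟩) (by simp [shortSegments])).trans ?_⟩
    simpa [Port.exitCost, hs] using hR
  · simp only [shortSegments, Sum.elim_inr, mem_Icc] at hs
    refine ⟨w, (dist_vertex_le_exitCost (a := ⟨w, dist v w, 0⟩)
      (by simp [shortSegments])).trans ?_⟩
    simp only [Port.exitCost, zero_add]
    rw [abs_of_nonpos (by linarith)]
    linarith

theorem geodesicSpace
    (hV : ∀ v w : V, LipschitzJoined (SeparationQuotient.mk (vertex (R := R) v))
      (SeparationQuotient.mk (vertex w)) (dist v w)) :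
    GeodesicSpace (SeparationQuotient (shortSegments V R).Point) := by
  intro x y
  obtain ⟨p, rfl⟩ := SeparationQuotient.surjective_mk x
  obtain ⟨q, rfl⟩ := SeparationQuotient.surjective_mk y
  refine LipschitzJoined.exists_isometry ?_
  rw [SeparationQuotient.dist_mk]
  refine SegmentGluing.lipschitzJoined isometry_mk _ hV (fun p a ha hpos => ?_) p q
  rw [mk_eq_mk_vertex ha hpos, cost_eq_zero ha]
  exact LipschitzJoined.refl _ le_rfl

end shortSegments

end ShortSegments

/-- Lemma A.5: a space admitting a `D`-quasi-ruling is `(1,4D)`-quasi-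
isometric to a geodesic space. -/
theorem statement14 {X : Type u} [mX : MetricSpace X] (D : ℝ) (hD : 0 ≤ D)
    (hX : AdmitsQuasiRuling X D) :
    ∃ (Xg : Type u) (mXg : MetricSpace Xg), @GeodesicSpace Xg mXg ∧
      ∃ ι : X → Xg, @IsQuasiIsometryWith X Xg mX mXg 1 (4 * D) ι := by
  let E := (edgeGluing hD hX).Point
  let ι : X → SeparationQuotient (shortSegments E D).Point := fun x =>
    SeparationQuotient.mk (shortSegments.vertex (edgeGluing.vertex hD hX x))
  have hι : ∀ x y, dist (ι x) (ι y) = dist x y := fun x y => by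
    rw [SeparationQuotient.dist_mk, shortSegments.isometry_vertex.dist_eq,
      edgeGluing.dist_vertex_vertex]
  refine ⟨_, inferInstance, shortSegments.geodesicSpace fun m m' =>
    edgeGluing.lipschitzJoined (shortSegments.isometry_mk.comp shortSegments.isometry_vertex)
      (fun p q h => shortSegments.lipschitzJoined_vertex h) m m',
    ι, fun x y => ?_, fun z => ?_⟩
  · rw [hι, div_one, one_mul]
    constructor <;> linarith
  · obtain ⟨p, rfl⟩ := SeparationQuotient.surjective_mk z
    obtain ⟨m, hm⟩ := shortSegments.exists_dist_vertex_le hD p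
    obtain ⟨x, hx⟩ := edgeGluing.exists_dist_vertex_le m
    refine ⟨x, ?_⟩
    rw [dist_comm, SeparationQuotient.dist_mk]
    have := dist_triangle p (shortSegments.vertex m)
      (shortSegments.vertex (edgeGluing.vertex hD hX x))
    rw [shortSegments.isometry_vertex.dist_eq] at this
    linarith
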